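/- The operator X of multiplication by the grid variable λ_x = x² admits the quadratic expression X = (R₁ + R₂)(M₁ − L) − ½R₁M₂ − ½R₂M₁ in the S–Heun operators: for every function f : ℂ → ℂ and every x ∈ ℂ with x(x−1)(x+1) ≠ 0, ((R₁+R₂)((M₁−L)f))(x) − ½(R₁(M₂f))(x) − ½(R₂(M₁f))(x) = x²·f(x). -/

import Mathlib

noncomputable section

/-- The S–Heun lowering operator L on the quadratic grid λ_x = x². -/
def opL (f : ℂ → ℂ) : ℂ → ℂ := fun x => (f (x + 1) - f (x - 1)) / (4 * x)

/-- The stabilizing S–Heun operator M₁ on the quadratic grid. -/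
def opM1 (f : ℂ → ℂ) : ℂ → ℂ :=
  fun x => ((2 * x - 1) * f (x + 1) + (2 * x + 1) * f (x - 1)) / (4 * x)

/-- The stabilizing S–Heun operator M₂ on the quadratic grid. -/
def opM2 (f : ℂ → ℂ) : ℂ → ℂ :=
  fun x => ((x ^ 2 + (x - 1) ^ 2) * f (x + 1) - ((x + 1) ^ 2 + x ^ 2) * f (x - 1)) / (4 * x)

/-- The raising S–Heun operator R₁ = λ_x M₁ on the quadratic grid. -/
def opR1 (f : ℂ → ℂ) : ℂ → ℂ := fun x => x ^ 2 * opM1 f x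

/-- The raising S–Heun operator R₂ = λ_x M₂ on the quadratic grid. -/
def opR2 (f : ℂ → ℂ) : ℂ → ℂ := fun x => x ^ 2 * opM2 f x

theorem stmt5 (f : ℂ → ℂ) (x : ℂ) (hx : x * (x - 1) * (x + 1) ≠ 0) :
    opR1 (fun y => opM1 f y - opL f y) x + opR2 (fun y => opM1 f y - opL f y) x
      - (1 / 2) * opR1 (opM2 f) x - (1 / 2) * opR2 (opM1 f) x = x ^ 2 * f x := by
  obtain ⟨⟨hx0, hx1⟩, hx2⟩ : (x ≠ 0 ∧ x - 1 ≠ 0) ∧ x + 1 ≠ 0 := by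
    simpa only [mul_ne_zero_iff] using hx
  simp only [opR1, opR2, opM1, opM2, opL, add_sub_cancel_right, sub_add_cancel]
  field_simp
  ring
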